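/- In the classical Dynkin game with f ≥ g, using non-anticipative strategies for the outer players does not change the value: inf_{ρ∈𝕋^{ii}} sup_{τ∈𝒯} E[f_{ρ(τ)} 1_{ρ(τ)<τ} + g_τ 1_{ρ(τ)≥τ}] = sup_{τ∈𝕋^{i}} inf_{ρ∈𝒯} E[f_ρ 1_{ρ<τ(ρ)} + g_{τ(ρ)} 1_{ρ≥τ(ρ)}] = inf_{ρ∈𝒯} sup_{τ∈𝒯} E[f_ρ 1_{ρ<τ} + g_τ 1_{ρ≥τ}] = sup_{τ∈𝒯} inf_{ρ∈𝒯} E[f_ρ 1_{ρ<τ} + g_τ 1_{ρ≥τ}]. -/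

import Mathlib

/-!
The value process `W T = g T`, `W t = g t ⊔ (f t ⊓ 𝔼[W (t + 1) | ℱ t])` lies between `g` and `f`;
it is a submartingale until `τ*`, the first time `W ≤ g`, and a supermartingale until `ρ*`, the
first time `f ≤ W`. Optional stopping then gives
`𝔼[payoff ρ* τ] ≤ 𝔼[W 0] ≤ 𝔼[payoff ρ τ*]` for all stopping times `ρ, τ ≤ T`, so `(ρ*, τ*)` is a
saddle point. A saddle point of constant strategies fixes the value of every class of strategies
that contains the constant ones and maps stopping times to stopping times.
-/

open MeasureTheory

section SaddlePoint

variable {ι : Sort*} {F : ι → ℝ} {C : ℝ}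

theorem bddAbove_range_of_abs_le (h : ∀ i, |F i| ≤ C) : BddAbove (Set.range F) :=
  ⟨C, Set.forall_mem_range.2 fun i => (abs_le.1 (h i)).2⟩

theorem bddBelow_range_of_abs_le (h : ∀ i, |F i| ≤ C) : BddBelow (Set.range F) :=
  ⟨-C, Set.forall_mem_range.2 fun i => (abs_le.1 (h i)).1⟩

theorem abs_ciSup_le [Nonempty ι] (h : ∀ i, |F i| ≤ C) : |⨆ i, F i| ≤ C :=
  abs_le.2 ⟨le_ciSup_of_le (bddAbove_range_of_abs_le h) (Classical.arbitrary ι)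
    (abs_le.1 (h _)).1, ciSup_le fun i => (abs_le.1 (h i)).2⟩

theorem abs_ciInf_le [Nonempty ι] (h : ∀ i, |F i| ≤ C) : |⨅ i, F i| ≤ C :=
  abs_le.2 ⟨le_ciInf fun i => (abs_le.1 (h i)).1,
    ciInf_le_of_le (bddBelow_range_of_abs_le h) (Classical.arbitrary ι) (abs_le.1 (h _)).2⟩

namespace IsSaddlePointOn

variable {α : Type*} {S : Set α} {D : α → α → ℝ} {ρs τs : α}

theorem ciInf_ciSup_eq (h : IsSaddlePointOn S S D ρs τs) (hρs : ρs ∈ S) (hτs : τs ∈ S)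
    (hC : ∀ a b, |D a b| ≤ C) : ⨅ ρ : S, ⨆ τ : S, D ρ τ = D ρs τs := by
  have : Nonempty S := ⟨⟨ρs, hρs⟩⟩
  refine le_antisymm ?_ (le_ciInf fun ρ => ?_)
  · exact ciInf_le_of_le (bddBelow_range_of_abs_le fun ρ => abs_ciSup_le fun τ => hC _ _)
      ⟨ρs, hρs⟩ (ciSup_le fun τ => h ρs hρs τ τ.2)
  · exact le_ciSup_of_le (bddAbove_range_of_abs_le fun τ => hC _ _) ⟨τs, hτs⟩ (h ρ ρ.2 τs hτs)

theorem ciSup_ciInf_eq (h : IsSaddlePointOn S S D ρs τs) (hρs : ρs ∈ S) (hτs : τs ∈ S)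
    (hC : ∀ a b, |D a b| ≤ C) : ⨆ τ : S, ⨅ ρ : S, D ρ τ = D ρs τs := by
  have : Nonempty S := ⟨⟨ρs, hρs⟩⟩
  refine le_antisymm (ciSup_le fun τ => ?_) ?_
  · exact ciInf_le_of_le (bddBelow_range_of_abs_le fun ρ => hC _ _) ⟨ρs, hρs⟩
      (h ρs hρs τ τ.2)
  · exact le_ciSup_of_le (bddAbove_range_of_abs_le fun τ => abs_ciInf_le fun ρ => hC _ _)
      ⟨τs, hτs⟩ (le_ciInf fun ρ => h ρ ρ.2 τs hτs)

theorem ciInf_strategy_ciSup_eq (h : IsSaddlePointOn S S D ρs τs) (hρs : ρs ∈ S)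
    (hτs : τs ∈ S) (hC : ∀ a b, |D a b| ≤ C) {P : (α → α) → Prop}
    (hP : ∀ ρ, P ρ → ∀ σ ∈ S, ρ σ ∈ S) (hconst : ∀ a ∈ S, P fun _ => a) :
    ⨅ ρ : {ρ // P ρ}, ⨆ τ : S, D (ρ.1 τ) τ = D ρs τs := by
  have : Nonempty S := ⟨⟨ρs, hρs⟩⟩
  have : Nonempty {ρ // P ρ} := ⟨⟨_, hconst ρs hρs⟩⟩
  refine le_antisymm ?_ (le_ciInf fun ρ => ?_)
  · exact ciInf_le_of_le (bddBelow_range_of_abs_le fun ρ => abs_ciSup_le fun τ => hC _ _)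
      ⟨_, hconst ρs hρs⟩ (ciSup_le fun τ => h ρs hρs τ τ.2)
  · exact le_ciSup_of_le (bddAbove_range_of_abs_le fun τ => hC _ _) ⟨τs, hτs⟩
      (h _ (hP ρ.1 ρ.2 τs hτs) τs hτs)

theorem ciSup_strategy_ciInf_eq (h : IsSaddlePointOn S S D ρs τs) (hρs : ρs ∈ S)
    (hτs : τs ∈ S) (hC : ∀ a b, |D a b| ≤ C) {P : (α → α) → Prop}
    (hP : ∀ τ, P τ → ∀ σ ∈ S, τ σ ∈ S) (hconst : ∀ a ∈ S, P fun _ => a) :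
    ⨆ τ : {τ // P τ}, ⨅ ρ : S, D ρ (τ.1 ρ) = D ρs τs := by
  have : Nonempty S := ⟨⟨ρs, hρs⟩⟩
  have : Nonempty {τ // P τ} := ⟨⟨_, hconst τs hτs⟩⟩
  refine le_antisymm (ciSup_le fun τ => ?_) ?_
  · exact ciInf_le_of_le (bddBelow_range_of_abs_le fun ρ => hC _ _) ⟨ρs, hρs⟩
      (h ρs hρs _ (hP τ.1 τ.2 ρs hρs))
  · exact le_ciSup_of_le (bddAbove_range_of_abs_le fun τ => abs_ciInf_le fun ρ => hC _ _)
      ⟨_, hconst τs hτs⟩ (le_ciInf fun ρ => h ρ ρ.2 τs hτs)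

end IsSaddlePointOn

end SaddlePoint

section

variable {Ω : Type*} {m : MeasurableSpace Ω}

section OptionalStopping

variable {μ : Measure Ω} {ℱ : Filtration ℕ m} {X : ℕ → Ω → ℝ} {τ σ : Ω → ℕ} {N : ℕ}

theorem stoppedValue_natCast_apply {β : Type*} (u : ℕ → Ω → β) (τ : Ω → ℕ) (ω : Ω) :
    stoppedValue u (fun ω => (τ ω : WithTop ℕ)) ω = u (τ ω) ω := rfl

theorem stoppedProcess_natCast_apply {β : Type*} (u : ℕ → Ω → β) (τ : Ω → ℕ) (t : ℕ) (ω : Ω) :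
    stoppedProcess u (fun ω => (τ ω : WithTop ℕ)) t ω = u (min t (τ ω)) ω := rfl

theorem stoppedProcess_succ_sub {β : Type*} [AddGroup β] (u : ℕ → Ω → β) (τ : Ω → ℕ) (t : ℕ) :
    stoppedProcess u (fun ω => (τ ω : WithTop ℕ)) (t + 1) -
        stoppedProcess u (fun ω => (τ ω : WithTop ℕ)) t =
      {ω | t < τ ω}.indicator (u (t + 1) - u t) := by
  ext ω
  by_cases h : t < τ ω
  · simp [stoppedProcess_natCast_apply, h, h.le, Nat.succ_le_of_lt h]
  · simp [stoppedProcess_natCast_apply, h, not_lt.1 h, (not_lt.1 h).trans t.le_succ]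

theorem submartingale_stoppedProcess_of_le_condExp [IsFiniteMeasure μ]
    (hX : StronglyAdapted ℱ X) (hint : ∀ t, Integrable (X t) μ)
    (hτ : IsStoppingTime ℱ fun ω => (τ ω : WithTop ℕ))
    (hle : ∀ t, ∀ᵐ ω ∂μ, t < τ ω → X t ω ≤ μ[X (t + 1) | ℱ t] ω) :
    Submartingale (stoppedProcess X fun ω => (τ ω : WithTop ℕ)) ℱ μ := by
  refine submartingale_of_condExp_sub_nonneg_nat (hX.stoppedProcess_of_discrete hτ)
    (integrable_stoppedProcess hτ hint) fun t => ?_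
  have hτt : MeasurableSet[ℱ t] {ω | t < τ ω} := by
    simpa using hτ.measurableSet_gt t
  rw [stoppedProcess_succ_sub]
  filter_upwards [condExp_indicator ((hint (t + 1)).sub (hint t)) hτt,
    condExp_sub (hint (t + 1)) (hint t) (ℱ t), hle t] with ω hind hsub hω
  rw [hind, Pi.zero_apply]
  by_cases h : t < τ ω
  · rw [Set.indicator_of_mem (s := {ω | t < τ ω}) h, hsub, Pi.sub_apply,
      condExp_of_stronglyMeasurable (ℱ.le t) (hX t) (hint t), sub_nonneg]
    exact hω h
  · rw [Set.indicator_of_notMem (s := {ω | t < τ ω}) h]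

theorem StronglyAdapted.integrable_of_abs_le [IsFiniteMeasure μ] (hX : StronglyAdapted ℱ X)
    {C : ℝ} (hC : ∀ t ω, |X t ω| ≤ C) (t : ℕ) : Integrable (X t) μ :=
  .of_bound ((hX t).mono (ℱ.le t)).aestronglyMeasurable C
    (.of_forall fun ω => (hC t ω).trans_eq' (Real.norm_eq_abs _))

theorem integral_le_integral_min_of_le_condExp [IsFiniteMeasure μ]
    (hX : StronglyAdapted ℱ X) (hint : ∀ t, Integrable (X t) μ)
    (hτ : IsStoppingTime ℱ fun ω => (τ ω : WithTop ℕ))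
    (hle : ∀ t, ∀ᵐ ω ∂μ, t < τ ω → X t ω ≤ μ[X (t + 1) | ℱ t] ω)
    (hσ : IsStoppingTime ℱ fun ω => (σ ω : WithTop ℕ)) (hσN : ∀ ω, σ ω ≤ N) :
    ∫ ω, X 0 ω ∂μ ≤ ∫ ω, X (min (σ ω) (τ ω)) ω ∂μ := by
  have := (submartingale_stoppedProcess_of_le_condExp hX hint hτ hle).expected_stoppedValue_mono
    (isStoppingTime_const ℱ 0) hσ (fun _ => bot_le) (N := N)
    (fun ω => WithTop.coe_le_coe.2 (hσN ω))
  simpa only [stoppedValue_const, stoppedValue_natCast_apply, stoppedProcess_natCast_apply,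
    Nat.zero_min] using this

theorem integral_min_le_integral_of_condExp_le [IsFiniteMeasure μ]
    (hX : StronglyAdapted ℱ X) (hint : ∀ t, Integrable (X t) μ)
    (hτ : IsStoppingTime ℱ fun ω => (τ ω : WithTop ℕ))
    (hle : ∀ t, ∀ᵐ ω ∂μ, t < τ ω → μ[X (t + 1) | ℱ t] ω ≤ X t ω)
    (hσ : IsStoppingTime ℱ fun ω => (σ ω : WithTop ℕ)) (hσN : ∀ ω, σ ω ≤ N) :
    ∫ ω, X (min (σ ω) (τ ω)) ω ∂μ ≤ ∫ ω, X 0 ω ∂μ := by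
  have hneg : ∀ t, ∀ᵐ ω ∂μ, t < τ ω → (-X) t ω ≤ μ[(-X) (t + 1) | ℱ t] ω := fun t => by
    filter_upwards [hle t, condExp_neg (X (t + 1)) (ℱ t)] with ω hω hneg h
    simpa [hneg] using hω h
  simpa [integral_neg] using integral_le_integral_min_of_le_condExp hX.neg (fun t => (hint t).neg)
    hτ hneg hσ hσN

end OptionalStopping

section DynkinValue

noncomputable def dynkinValue (μ : Measure Ω) (ℱ : Filtration ℕ m) (T : ℕ) (f g : ℕ → Ω → ℝ)
    (t : ℕ) : Ω → ℝ :=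
  if t < T then g t ⊔ (f t ⊓ μ[dynkinValue μ ℱ T f g (t + 1) | ℱ t]) else g t
termination_by T - t

variable {μ : Measure Ω} {ℱ : Filtration ℕ m} {T t : ℕ} {f g : ℕ → Ω → ℝ}

theorem dynkinValue_of_lt (ht : t < T) :
    dynkinValue μ ℱ T f g t = g t ⊔ (f t ⊓ μ[dynkinValue μ ℱ T f g (t + 1) | ℱ t]) := by
  rw [dynkinValue, if_pos ht]

theorem dynkinValue_of_le (ht : T ≤ t) : dynkinValue μ ℱ T f g t = g t := by
  rw [dynkinValue, if_neg (not_lt.2 ht)]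

theorem le_dynkinValue : g t ≤ dynkinValue μ ℱ T f g t := by
  rcases lt_or_ge t T with ht | ht
  · exact (dynkinValue_of_lt ht).ge.trans' le_sup_left
  · exact (dynkinValue_of_le ht).ge

theorem dynkinValue_ae_le (hfg : ∀ t, g t ≤ᵐ[μ] f t) : dynkinValue μ ℱ T f g t ≤ᵐ[μ] f t := by
  rcases lt_or_ge t T with ht | ht
  · filter_upwards [hfg t] with ω hω
    rw [dynkinValue_of_lt ht]
    exact sup_le hω inf_le_left
  · rw [dynkinValue_of_le ht]; exact hfg t

theorem stronglyAdapted_dynkinValue (hf : StronglyAdapted ℱ f) (hg : StronglyAdapted ℱ g) :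
    StronglyAdapted ℱ (dynkinValue μ ℱ T f g) := by
  intro t
  induction t using dynkinValue.induct T with
  | case1 t ht _ =>
    rw [dynkinValue_of_lt ht]
    exact @StronglyMeasurable.sup _ _ _ _ (ℱ t) _ _ _ (hg t)
      (@StronglyMeasurable.inf _ _ _ _ (ℱ t) _ _ _ (hf t) stronglyMeasurable_condExp)
  | case2 t ht => rw [dynkinValue_of_le (not_lt.1 ht)]; exact hg t

theorem integrable_dynkinValue (hf : ∀ t, Integrable (f t) μ) (hg : ∀ t, Integrable (g t) μ)
    (t : ℕ) : Integrable (dynkinValue μ ℱ T f g t) μ := by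
  induction t using dynkinValue.induct T with
  | case1 t ht _ => rw [dynkinValue_of_lt ht]; exact (hg t).sup ((hf t).inf integrable_condExp)
  | case2 t ht => rw [dynkinValue_of_le (not_lt.1 ht)]; exact hg t

theorem dynkinValue_le_condExp (ht : t < T) {ω : Ω} (hω : g t ω < dynkinValue μ ℱ T f g t ω) :
    dynkinValue μ ℱ T f g t ω ≤ μ[dynkinValue μ ℱ T f g (t + 1) | ℱ t] ω := by
  rw [dynkinValue_of_lt ht] at hω ⊢
  simp only [Pi.sup_apply, Pi.inf_apply, lt_sup_iff, lt_irrefl, false_or] at hω ⊢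
  rw [max_eq_right hω.le]
  exact min_le_right _ _

theorem condExp_le_dynkinValue (ht : t < T) {ω : Ω} (hω : dynkinValue μ ℱ T f g t ω < f t ω) :
    μ[dynkinValue μ ℱ T f g (t + 1) | ℱ t] ω ≤ dynkinValue μ ℱ T f g t ω := by
  rw [dynkinValue_of_lt ht] at hω ⊢
  simp only [Pi.sup_apply, Pi.inf_apply] at hω ⊢
  by_contra! h
  exact (lt_min hω h).not_ge (le_max_right _ _)

end DynkinValue

section DynkinGame

variable {μ : Measure Ω} {ℱ : Filtration ℕ m} {T : ℕ} {f g : ℕ → Ω → ℝ} {C : ℝ}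

def boundedStoppingTimes (ℱ : Filtration ℕ m) (T : ℕ) : Set (Ω → ℕ) :=
  {σ | IsStoppingTime ℱ (fun ω => (σ ω : WithTop ℕ)) ∧ ∀ ω, σ ω ≤ T}

def dynkinPayoff (f g : ℕ → Ω → ℝ) (ρ τ : Ω → ℕ) (ω : Ω) : ℝ :=
  if ρ ω < τ ω then f (ρ ω) ω else g (τ ω) ω

theorem norm_dynkinPayoff_le (hC : ∀ t ω, |f t ω| ≤ C ∧ |g t ω| ≤ C) (ρ τ : Ω → ℕ) (ω : Ω) :
    ‖dynkinPayoff f g ρ τ ω‖ ≤ C := by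
  rw [Real.norm_eq_abs, dynkinPayoff]
  split_ifs
  exacts [(hC _ ω).1, (hC _ ω).2]

theorem abs_integral_dynkinPayoff_le [IsProbabilityMeasure μ]
    (hC : ∀ t ω, |f t ω| ≤ C ∧ |g t ω| ≤ C) (ρ τ : Ω → ℕ) :
    |∫ ω, dynkinPayoff f g ρ τ ω ∂μ| ≤ C := by
  simpa using norm_integral_le_of_norm_le_const (μ := μ)
    (.of_forall (norm_dynkinPayoff_le hC ρ τ))

theorem integrable_dynkinPayoff [IsFiniteMeasure μ] (hf : StronglyAdapted ℱ f)
    (hg : StronglyAdapted ℱ g) (hC : ∀ t ω, |f t ω| ≤ C ∧ |g t ω| ≤ C) {ρ τ : Ω → ℕ}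
    (hρ : ρ ∈ boundedStoppingTimes ℱ T) (hτ : τ ∈ boundedStoppingTimes ℱ T) :
    Integrable (dynkinPayoff f g ρ τ) μ := by
  have hlt : MeasurableSet {ω | ρ ω < τ ω} := by
    simpa using measurableSet_lt hρ.1.measurable' hτ.1.measurable'
  have hfρ := stronglyMeasurable_stoppedValue_of_le hf.isStronglyProgressive_of_discrete hρ.1
    (fun ω => WithTop.coe_le_coe.2 (hρ.2 ω))
  have hgτ := stronglyMeasurable_stoppedValue_of_le hg.isStronglyProgressive_of_discrete hτ.1
    (fun ω => WithTop.coe_le_coe.2 (hτ.2 ω))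
  refine .of_bound ?_ C (.of_forall (norm_dynkinPayoff_le hC ρ τ))
  exact (StronglyMeasurable.ite hlt (hfρ.mono (ℱ.le T)) (hgτ.mono (ℱ.le T))).aestronglyMeasurable

noncomputable def dynkinStopMax (μ : Measure Ω) (ℱ : Filtration ℕ m) (T : ℕ)
    (f g : ℕ → Ω → ℝ) : Ω → ℕ :=
  hittingBtwn (dynkinValue μ ℱ T f g - g) (Set.Iic 0) 0 T

noncomputable def dynkinStopMin (μ : Measure Ω) (ℱ : Filtration ℕ m) (T : ℕ)
    (f g : ℕ → Ω → ℝ) : Ω → ℕ :=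
  hittingBtwn (f - dynkinValue μ ℱ T f g) (Set.Iic 0) 0 T

theorem dynkinStopMax_mem (hf : StronglyAdapted ℱ f) (hg : StronglyAdapted ℱ g) :
    dynkinStopMax μ ℱ T f g ∈ boundedStoppingTimes ℱ T :=
  ⟨((stronglyAdapted_dynkinValue hf hg).sub hg).adapted.isStoppingTime_hittingBtwn
    measurableSet_Iic, fun _ => hittingBtwn_le _⟩

theorem dynkinStopMin_mem (hf : StronglyAdapted ℱ f) (hg : StronglyAdapted ℱ g) :
    dynkinStopMin μ ℱ T f g ∈ boundedStoppingTimes ℱ T :=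
  ⟨(hf.sub (stronglyAdapted_dynkinValue hf hg)).adapted.isStoppingTime_hittingBtwn
    measurableSet_Iic, fun _ => hittingBtwn_le _⟩

theorem dynkinValue_dynkinStopMax (ω : Ω) :
    dynkinValue μ ℱ T f g (dynkinStopMax μ ℱ T f g ω) ω = g (dynkinStopMax μ ℱ T f g ω) ω := by
  refine le_antisymm ?_ (le_dynkinValue _)
  simpa [dynkinStopMax] using hittingBtwn_mem_set (u := dynkinValue μ ℱ T f g - g) (ω := ω)
    ⟨T, ⟨T.zero_le, le_rfl⟩, show _ ∈ Set.Iic 0 by simp [dynkinValue_of_le le_rfl]⟩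

theorem lt_dynkinValue_of_lt_dynkinStopMax {t : ℕ} {ω : Ω} (ht : t < dynkinStopMax μ ℱ T f g ω) :
    g t ω < dynkinValue μ ℱ T f g t ω := by
  simpa [sub_nonpos] using notMem_of_lt_hittingBtwn ht t.zero_le

theorem le_dynkinValue_dynkinStopMin {ω : Ω} (h : dynkinStopMin μ ℱ T f g ω < T) :
    f (dynkinStopMin μ ℱ T f g ω) ω ≤ dynkinValue μ ℱ T f g (dynkinStopMin μ ℱ T f g ω) ω := by
  obtain ⟨j, hj, hjs⟩ := (hittingBtwn_lt_iff T le_rfl).1 h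
  simpa [dynkinStopMin] using hittingBtwn_mem_set ⟨j, Set.Ico_subset_Icc_self hj, hjs⟩

theorem dynkinValue_lt_of_lt_dynkinStopMin {t : ℕ} {ω : Ω} (ht : t < dynkinStopMin μ ℱ T f g ω) :
    dynkinValue μ ℱ T f g t ω < f t ω := by
  simpa [sub_nonpos] using notMem_of_lt_hittingBtwn ht t.zero_le

theorem integral_dynkinValue_zero_le_integral_dynkinPayoff [IsFiniteMeasure μ]
    (hf : StronglyAdapted ℱ f) (hg : StronglyAdapted ℱ g)
    (hC : ∀ t ω, |f t ω| ≤ C ∧ |g t ω| ≤ C) (hfg : ∀ t, g t ≤ᵐ[μ] f t) {ρ : Ω → ℕ}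
    (hρ : ρ ∈ boundedStoppingTimes ℱ T) :
    ∫ ω, dynkinValue μ ℱ T f g 0 ω ∂μ ≤
      ∫ ω, dynkinPayoff f g ρ (dynkinStopMax μ ℱ T f g) ω ∂μ := by
  set W := dynkinValue μ ℱ T f g
  set τs := dynkinStopMax μ ℱ T f g
  have hτs : τs ∈ boundedStoppingTimes ℱ T := dynkinStopMax_mem hf hg
  have hWint := integrable_dynkinValue (μ := μ) (ℱ := ℱ) (T := T)
    (StronglyAdapted.integrable_of_abs_le hf fun t ω => (hC t ω).1)
    (StronglyAdapted.integrable_of_abs_le hg fun t ω => (hC t ω).2)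
  have hWmin : Integrable (fun ω => W (min (ρ ω) (τs ω)) ω) μ :=
    integrable_stoppedValue ℕ (hρ.1.min hτs.1) hWint
      (fun ω => min_le_of_right_le (WithTop.coe_le_coe.2 (hτs.2 ω)))
  have hWf : ∀ᵐ ω ∂μ, ∀ t, W t ω ≤ f t ω := ae_all_iff.2 fun t => dynkinValue_ae_le hfg
  calc ∫ ω, W 0 ω ∂μ ≤ ∫ ω, W (min (ρ ω) (τs ω)) ω ∂μ :=
        integral_le_integral_min_of_le_condExp (stronglyAdapted_dynkinValue hf hg) hWint hτs.1
          (fun t => .of_forall fun ω ht => dynkinValue_le_condExp (ht.trans_le (hτs.2 ω))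
            (lt_dynkinValue_of_lt_dynkinStopMax ht)) hρ.1 hρ.2
    _ ≤ ∫ ω, dynkinPayoff f g ρ τs ω ∂μ := by
        refine integral_mono_ae hWmin (integrable_dynkinPayoff hf hg hC hρ hτs) ?_
        filter_upwards [hWf] with ω hω
        dsimp only [dynkinPayoff]
        split_ifs with h
        · rw [min_eq_left h.le]; exact hω _
        · rw [min_eq_right (not_lt.1 h)]; exact (dynkinValue_dynkinStopMax ω).le

theorem integral_dynkinPayoff_le_integral_dynkinValue_zero [IsFiniteMeasure μ]
    (hf : StronglyAdapted ℱ f) (hg : StronglyAdapted ℱ g)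
    (hC : ∀ t ω, |f t ω| ≤ C ∧ |g t ω| ≤ C) {τ : Ω → ℕ} (hτ : τ ∈ boundedStoppingTimes ℱ T) :
    ∫ ω, dynkinPayoff f g (dynkinStopMin μ ℱ T f g) τ ω ∂μ ≤
      ∫ ω, dynkinValue μ ℱ T f g 0 ω ∂μ := by
  set W := dynkinValue μ ℱ T f g
  set ρs := dynkinStopMin μ ℱ T f g
  have hρs : ρs ∈ boundedStoppingTimes ℱ T := dynkinStopMin_mem hf hg
  have hWint := integrable_dynkinValue (μ := μ) (ℱ := ℱ) (T := T)
    (StronglyAdapted.integrable_of_abs_le hf fun t ω => (hC t ω).1)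
    (StronglyAdapted.integrable_of_abs_le hg fun t ω => (hC t ω).2)
  have hWmin : Integrable (fun ω => W (min (τ ω) (ρs ω)) ω) μ :=
    integrable_stoppedValue ℕ (hτ.1.min hρs.1) hWint
      (fun ω => min_le_of_right_le (WithTop.coe_le_coe.2 (hρs.2 ω)))
  calc ∫ ω, dynkinPayoff f g ρs τ ω ∂μ ≤ ∫ ω, W (min (τ ω) (ρs ω)) ω ∂μ := by
        refine integral_mono_ae (integrable_dynkinPayoff hf hg hC hρs hτ) hWmin (.of_forall ?_)
        intro ω
        dsimp only [dynkinPayoff]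
        split_ifs with h
        · rw [min_eq_right h.le]; exact le_dynkinValue_dynkinStopMin (h.trans_le (hτ.2 ω))
        · rw [min_eq_left (not_lt.1 h)]; exact le_dynkinValue (t := τ ω) ω
    _ ≤ ∫ ω, W 0 ω ∂μ :=
        integral_min_le_integral_of_condExp_le (stronglyAdapted_dynkinValue hf hg) hWint hρs.1
          (fun t => .of_forall fun ω ht => condExp_le_dynkinValue (ht.trans_le (hρs.2 ω))
            (dynkinValue_lt_of_lt_dynkinStopMin ht)) hτ.1 hτ.2

theorem isSaddlePointOn_dynkinStop [IsFiniteMeasure μ]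
    (hf : StronglyAdapted ℱ f) (hg : StronglyAdapted ℱ g)
    (hC : ∀ t ω, |f t ω| ≤ C ∧ |g t ω| ≤ C) (hfg : ∀ t, g t ≤ᵐ[μ] f t) :
    IsSaddlePointOn (boundedStoppingTimes ℱ T) (boundedStoppingTimes ℱ T)
      (fun ρ τ => ∫ ω, dynkinPayoff f g ρ τ ω ∂μ)
      (dynkinStopMin μ ℱ T f g) (dynkinStopMax μ ℱ T f g) := fun _ hρ _ hτ =>
  (integral_dynkinPayoff_le_integral_dynkinValue_zero hf hg hC hτ).trans
    (integral_dynkinValue_zero_le_integral_dynkinPayoff hf hg hC hfg hρ)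

end DynkinGame

end

/-- Classical Dynkin game with `f ≥ g`: using non-anticipative strategies for the outer
players does not change the value, and the game with stopping times has a value. -/
theorem stmt_17 {Ω : Type*} {m : MeasurableSpace Ω} {μ : Measure Ω} [IsProbabilityMeasure μ]
    (ℱ : Filtration ℕ m) (T : ℕ)
    (f g : ℕ → Ω → ℝ)
    (hfmeas : ∀ t, StronglyMeasurable[ℱ t] (f t))
    (hgmeas : ∀ t, StronglyMeasurable[ℱ t] (g t))
    (hbdd : ∃ C, ∀ t ω, |f t ω| ≤ C ∧ |g t ω| ≤ C)
    (hfg : ∀ t, g t ≤ᵐ[μ] f t)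
    (𝒯 : Set (Ω → ℕ))
    (h𝒯 : 𝒯 = {σ : Ω → ℕ | IsStoppingTime ℱ (fun ω => (σ ω : WithTop ℕ)) ∧ ∀ ω, σ ω ≤ T})
    (TypeI TypeII : ((Ω → ℕ) → Ω → ℕ) → Prop)
    (hTypeI : ∀ ρ, TypeI ρ ↔ ((∀ σ ∈ 𝒯, ρ σ ∈ 𝒯) ∧ ∀ σ₁ ∈ 𝒯, ∀ σ₂ ∈ 𝒯, ∀ ω,
      (ρ σ₁ ω = ρ σ₂ ω ∧ ρ σ₁ ω ≤ min (σ₁ ω) (σ₂ ω)) ∨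
        min (σ₁ ω) (σ₂ ω) < min (ρ σ₁ ω) (ρ σ₂ ω)))
    (hTypeII : ∀ ρ, TypeII ρ ↔ ((∀ σ ∈ 𝒯, ρ σ ∈ 𝒯) ∧ ∀ σ₁ ∈ 𝒯, ∀ σ₂ ∈ 𝒯, ∀ ω,
      (ρ σ₁ ω = ρ σ₂ ω ∧ ρ σ₁ ω < min (σ₁ ω) (σ₂ ω)) ∨
        min (σ₁ ω) (σ₂ ω) ≤ min (ρ σ₁ ω) (ρ σ₂ ω)))
    (D : (Ω → ℕ) → (Ω → ℕ) → ℝ)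
    (hD : ∀ ρ τ, D ρ τ = ∫ ω, (if ρ ω < τ ω then f (ρ ω) ω else g (τ ω) ω) ∂μ) :
    (⨅ ρ : {ρ : (Ω → ℕ) → Ω → ℕ // TypeII ρ}, ⨆ τ : 𝒯, D (ρ.1 τ.1) τ.1) =
      (⨅ ρ : 𝒯, ⨆ τ : 𝒯, D ρ.1 τ.1) ∧
    (⨆ τ : {τ : (Ω → ℕ) → Ω → ℕ // TypeI τ}, ⨅ ρ : 𝒯, D ρ.1 (τ.1 ρ.1)) =
      (⨅ ρ : 𝒯, ⨆ τ : 𝒯, D ρ.1 τ.1) ∧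
    (⨅ ρ : 𝒯, ⨆ τ : 𝒯, D ρ.1 τ.1) = (⨆ τ : 𝒯, ⨅ ρ : 𝒯, D ρ.1 τ.1) := by
  obtain ⟨C, hC⟩ := hbdd
  obtain rfl : D = fun ρ τ => ∫ ω, dynkinPayoff f g ρ τ ω ∂μ := funext₂ hD
  obtain rfl : 𝒯 = boundedStoppingTimes ℱ T := h𝒯
  have hsaddle := isSaddlePointOn_dynkinStop (T := T) hfmeas hgmeas hC hfg
  have hρs := dynkinStopMin_mem (μ := μ) (T := T) hfmeas hgmeas
  have hτs := dynkinStopMax_mem (μ := μ) (T := T) hfmeas hgmeas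
  have hbound := abs_integral_dynkinPayoff_le (μ := μ) hC
  have hconstI : ∀ a ∈ boundedStoppingTimes ℱ T, TypeI fun _ => a := fun a ha =>
    (hTypeI _).2 ⟨fun _ _ => ha, fun _ _ _ _ _ =>
      (le_or_gt _ _).imp (⟨rfl, ·⟩) (·.trans_eq (min_self _).symm)⟩
  have hconstII : ∀ a ∈ boundedStoppingTimes ℱ T, TypeII fun _ => a := fun a ha =>
    (hTypeII _).2 ⟨fun _ _ => ha, fun _ _ _ _ _ =>
      (lt_or_ge _ _).imp (⟨rfl, ·⟩) (·.trans_eq (min_self _).symm)⟩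
  have hvalue := hsaddle.ciInf_ciSup_eq hρs hτs hbound
  refine ⟨?_, ?_, hvalue.trans (hsaddle.ciSup_ciInf_eq hρs hτs hbound).symm⟩
  · exact (hsaddle.ciInf_strategy_ciSup_eq hρs hτs hbound (fun ρ hρ => ((hTypeII ρ).1 hρ).1)
      hconstII).trans hvalue.symm
  · exact (hsaddle.ciSup_strategy_ciInf_eq hρs hτs hbound (fun τ hτ => ((hTypeI τ).1 hτ).1)
      hconstI).trans hvalue.symm
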